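/- Let H be a subgroup of the Weyl–Heisenberg group G that intersects the center of G trivially. Then the number of distinct conjugates of H in G, i.e. the cardinality of the set {g⁻¹Hg : g ∈ G}, equals the cardinality of S_H. -/

import Mathlib

/-- Dot product of two vectors over `ZMod p`. -/
def dot {p n : ℕ} (u v : Fin n → ZMod p) : ZMod p := ∑ i, u i * v i

/-- The underlying set of the Weyl–Heisenberg group: triples `(x, y, z)`. -/
@[ext] structure WH (p n : ℕ) where
  x : Fin n → ZMod p
  y : Fin n → ZMod p
  z : ZMod p

namespace WH

variable {p n : ℕ}

/-- Multiplication `(x,y,z)·(x',y',z') = (x+x', y+y', z+z'+x'·y)`. -/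
def wmul (g h : WH p n) : WH p n := ⟨g.x + h.x, g.y + h.y, g.z + h.z + dot h.x g.y⟩

def wone : WH p n := ⟨0, 0, 0⟩

def winv (g : WH p n) : WH p n := ⟨-g.x, -g.y, dot g.x g.y - g.z⟩

instance : Group (WH p n) where
  mul := wmul
  one := wone
  inv := winv
  mul_assoc g h k := by
    show wmul (wmul g h) k = wmul g (wmul h k)
    simp only [wmul, dot, mk.injEq, Pi.add_apply, mul_add, add_mul,
      Finset.sum_add_distrib]
    refine ⟨by abel, by abel, by ring⟩
  one_mul g := by
    show wmul wone g = g
    obtain ⟨x, y, z⟩ := g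
    simp [wmul, wone, dot]
  mul_one g := by
    show wmul g wone = g
    obtain ⟨x, y, z⟩ := g
    simp [wmul, wone, dot]
  inv_mul_cancel g := by
    show wmul (winv g) g = wone
    obtain ⟨x, y, z⟩ := g
    simp only [wmul, winv, wone, dot, mk.injEq, Pi.neg_apply, neg_mul]
    refine ⟨by abel, by abel, ?_⟩
    simp [Finset.sum_neg_distrib]

theorem mul_def (g h : WH p n) :
    g * h = ⟨g.x + h.x, g.y + h.y, g.z + h.z + dot h.x g.y⟩ := rfl

theorem one_def : (1 : WH p n) = ⟨0, 0, 0⟩ := rfl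

end WH

/-- `S_H`: the pairs `(x,y)` occurring in `H`. -/
def SH {p n : ℕ} (H : Subgroup (WH p n)) : Set ((Fin n → ZMod p) × (Fin n → ZMod p)) :=
  {v | ∃ z : ZMod p, (⟨v.1, v.2, z⟩ : WH p n) ∈ H}

/-- Symplectic inner product `⟨(x,y),(x',y')⟩ = x·y' - y·x'`. -/
def symp {p n : ℕ} (v w : (Fin n → ZMod p) × (Fin n → ZMod p)) : ZMod p :=
  dot v.1 w.2 - dot v.2 w.1

/-- Orthogonal complement under the symplectic inner product. -/
def sperp {p n : ℕ} (S : Set ((Fin n → ZMod p) × (Fin n → ZMod p))) :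
    Set ((Fin n → ZMod p) × (Fin n → ZMod p)) :=
  {v | ∀ s ∈ S, symp v s = 0}

/-!
Conjugating `h` by `g` keeps `(h.x, h.y)` and shifts `h.z` by the symplectic pairing of
`(g.x, g.y)` with `(h.x, h.y)`. As `H` meets the centre trivially, `h ∈ H` is determined by
`(h.x, h.y) ∈ S_H`, so `g⁻¹Hg` is determined by the functional `symp (g.x, g.y)` restricted to
`S_H`. By nondegeneracy of `symp` every functional on `S_H` arises this way, so the conjugates
are in bijection with the dual of `S_H`, which has as many elements as `S_H`.
-/

theorem Nat.card_range_eq_of_eq_iff {α β γ : Type*} {f : α → β} {g : α → γ}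
    (h : ∀ a b, f a = f b ↔ g a = g b) :
    Nat.card (Set.range f) = Nat.card (Set.range g) :=
  Nat.card_congr <| (Setoid.quotientKerEquivRange f).symm.trans <|
    (Quotient.congrRight h).trans (Setoid.quotientKerEquivRange g)

theorem Subgroup.coe_map_conj_inv {G : Type*} [Group G] (H : Subgroup G) (g : G) :
    (H.map (MulAut.conj g⁻¹).toMonoidHom : Set G) = (fun h => g⁻¹ * h * g) '' H := by
  ext
  simp

open scoped Matrix

theorem dot_eq_dotProduct {p n : ℕ} (u v : Fin n → ZMod p) : dot u v = u ⬝ᵥ v := rfl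

theorem symp_eq_dotProduct {p n : ℕ} (v w : (Fin n → ZMod p) × (Fin n → ZMod p)) :
    symp v w = v.1 ⬝ᵥ w.2 - v.2 ⬝ᵥ w.1 := rfl

namespace WH

variable {p n : ℕ}

theorem inv_def (g : WH p n) : g⁻¹ = ⟨-g.x, -g.y, dot g.x g.y - g.z⟩ := rfl

theorem inv_mul_mul_eq (g h : WH p n) :
    g⁻¹ * h * g = ⟨h.x, h.y, h.z + symp (g.x, g.y) (h.x, h.y)⟩ := by
  simp only [inv_def, mul_def, symp_eq_dotProduct, dot_eq_dotProduct, mk.injEq,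
    dotProduct_neg, dotProduct_add, dotProduct_comm h.x g.y]
  exact ⟨by abel, by abel, by ring⟩

theorem mk_zero_zero_mem_center (t : ZMod p) :
    (⟨0, 0, t⟩ : WH p n) ∈ Subgroup.center (WH p n) :=
  Subgroup.mem_center_iff.mpr fun g => by
    simp only [mul_def, dot_eq_dotProduct, zero_dotProduct, dotProduct_zero, add_zero, add_comm]

theorem eq_of_mem_of_x_eq_of_y_eq {H : Subgroup (WH p n)}
    (hZ : H ⊓ Subgroup.center (WH p n) = ⊥) {h h' : WH p n} (hh : h ∈ H) (hh' : h' ∈ H)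
    (hx : h.x = h'.x) (hy : h.y = h'.y) : h = h' := by
  have hcenter : h'⁻¹ * h ∈ Subgroup.center (WH p n) := by
    convert mk_zero_zero_mem_center (h'⁻¹ * h).z using 1
    ext <;> simp [inv_def, mul_def, hx, hy]
  have hbot : h'⁻¹ * h ∈ H ⊓ Subgroup.center (WH p n) :=
    ⟨H.mul_mem (H.inv_mem hh') hh, hcenter⟩
  rw [hZ, Subgroup.mem_bot, inv_mul_eq_one] at hbot
  exact hbot.symm

theorem map_conj_inv_eq_iff {H : Subgroup (WH p n)}
    (hZ : H ⊓ Subgroup.center (WH p n) = ⊥) {g g' : WH p n} :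
    H.map (MulAut.conj g⁻¹).toMonoidHom = H.map (MulAut.conj g'⁻¹).toMonoidHom ↔
      ∀ s ∈ SH H, symp (g.x, g.y) s = symp (g'.x, g'.y) s := by
  rw [← SetLike.coe_set_eq, Subgroup.coe_map_conj_inv, Subgroup.coe_map_conj_inv]
  constructor
  · rintro hconj ⟨x, y⟩ ⟨z, hs⟩
    obtain ⟨h', hh', hconj'⟩ : g⁻¹ * ⟨x, y, z⟩ * g ∈ (fun h => g'⁻¹ * h * g') '' H :=
      hconj ▸ Set.mem_image_of_mem _ hs
    simp only [inv_mul_mul_eq, mk.injEq] at hconj'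
    obtain ⟨rfl, rfl, hz⟩ := hconj'
    have hh'z : h'.z = z := congrArg WH.z (eq_of_mem_of_x_eq_of_y_eq hZ hh' hs rfl rfl)
    linear_combination hh'z - hz
  · intro hsymp
    refine Set.image_congr fun h hh => ?_
    rw [inv_mul_mul_eq, inv_mul_mul_eq, hsymp _ ⟨h.z, hh⟩]

end WH

def SHSubmodule {p n : ℕ} (H : Subgroup (WH p n)) :
    Submodule (ZMod p) ((Fin n → ZMod p) × (Fin n → ZMod p)) :=
  AddSubgroup.toZModSubmodule p
    { carrier := SH H
      zero_mem' := ⟨0, H.one_mem⟩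
      add_mem' := fun ⟨_, ha⟩ ⟨_, hb⟩ => ⟨_, H.mul_mem ha hb⟩
      neg_mem' := fun ⟨_, ha⟩ => ⟨_, H.inv_mem ha⟩ }

section Symplectic

variable {p n : ℕ}

def sympBilin : ((Fin n → ZMod p) × (Fin n → ZMod p)) →ₗ[ZMod p]
    ((Fin n → ZMod p) × (Fin n → ZMod p)) →ₗ[ZMod p] ZMod p :=
  LinearMap.mk₂ (ZMod p) symp
    (fun _ _ _ => by
      simp only [symp_eq_dotProduct, Prod.fst_add, Prod.snd_add, add_dotProduct]; ring)
    (fun _ _ _ => by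
      simp only [symp_eq_dotProduct, Prod.smul_fst, Prod.smul_snd, smul_dotProduct, smul_eq_mul]
      ring)
    (fun _ _ _ => by
      simp only [symp_eq_dotProduct, Prod.fst_add, Prod.snd_add, dotProduct_add]; ring)
    (fun _ _ _ => by
      simp only [symp_eq_dotProduct, Prod.smul_fst, Prod.smul_snd, dotProduct_smul, smul_eq_mul]
      ring)

theorem sympBilin_apply (v w : (Fin n → ZMod p) × (Fin n → ZMod p)) :
    sympBilin v w = symp v w :=
  rfl

theorem sympBilin_injective : Function.Injective (sympBilin (p := p) (n := n)) := by
  refine (injective_iff_map_eq_zero _).mpr fun v hv => ?_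
  have hx (i : Fin n) : v.1 i = 0 := by
    simpa [sympBilin_apply, symp_eq_dotProduct] using LinearMap.congr_fun hv (0, Pi.single i 1)
  have hy (i : Fin n) : v.2 i = 0 := by
    simpa [sympBilin_apply, symp_eq_dotProduct] using LinearMap.congr_fun hv (Pi.single i 1, 0)
  ext i
  exacts [hx i, hy i]

theorem sympBilin_surjective [Fact p.Prime] :
    Function.Surjective (sympBilin (p := p) (n := n)) :=
  (LinearMap.injective_iff_surjective_of_finrank_eq_finrank Subspace.dual_finrank_eq.symm).mp
    sympBilin_injective

theorem surjective_dualMap_sympBilin [Fact p.Prime]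
    (S : Submodule (ZMod p) ((Fin n → ZMod p) × (Fin n → ZMod p))) :
    Function.Surjective fun v => S.subtype.dualMap (sympBilin v) :=
  (LinearMap.dualMap_surjective_of_injective S.injective_subtype).comp sympBilin_surjective

end Symplectic

theorem card_conjugates_eq_card_SH_general (p n : ℕ) [Fact p.Prime]
    (H : Subgroup (WH p n)) (hZ : H ⊓ Subgroup.center (WH p n) = ⊥) :
    Nat.card {K : Subgroup (WH p n) |
        ∃ g : WH p n, (K : Set (WH p n)) = (fun h => g⁻¹ * h * g) '' (H : Set (WH p n))} =
      Nat.card (SH H) := by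
  let S := SHSubmodule H
  let restrict (g : WH p n) : Module.Dual (ZMod p) S := S.subtype.dualMap (sympBilin (g.x, g.y))
  have hconjugates : {K : Subgroup (WH p n) |
      ∃ g : WH p n, (K : Set (WH p n)) = (fun h => g⁻¹ * h * g) '' (H : Set (WH p n))} =
      Set.range fun g : WH p n => H.map (MulAut.conj g⁻¹).toMonoidHom := by
    ext K
    simp only [Set.mem_ofPred_eq, Set.mem_range, ← Subgroup.coe_map_conj_inv, SetLike.coe_set_eq,
      eq_comm]
  have hfibres (g g' : WH p n) : H.map (MulAut.conj g⁻¹).toMonoidHom =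
      H.map (MulAut.conj g'⁻¹).toMonoidHom ↔ restrict g = restrict g' := by
    rw [WH.map_conj_inv_eq_iff hZ, LinearMap.ext_iff, Subtype.forall]
    rfl
  have hrestrict : Function.Surjective restrict := fun φ =>
    let ⟨v, hv⟩ := surjective_dualMap_sympBilin S φ
    ⟨⟨v.1, v.2, 0⟩, hv⟩
  rw [hconjugates, Nat.card_range_eq_of_eq_iff hfibres, hrestrict.range_eq, Nat.card_univ]
  exact Nat.card_congr (LinearEquiv.ofFinrankEq _ _ Subspace.dual_finrank_eq).toEquiv

/-- If `H` intersects the center trivially, then the number of distinct conjugates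
`g⁻¹Hg` of `H` in `G` equals the cardinality of `S_H`. -/
theorem card_conjugates_eq_card_SH (p n : ℕ) [Fact p.Prime] (hn : 1 ≤ n)
    (H : Subgroup (WH p n)) (hZ : H ⊓ Subgroup.center (WH p n) = ⊥) :
    Nat.card {K : Subgroup (WH p n) |
        ∃ g : WH p n, (K : Set (WH p n)) = (fun h => g⁻¹ * h * g) '' (H : Set (WH p n))} =
      Nat.card (SH H) :=
  card_conjugates_eq_card_SH_general p n H hZ
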